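/- Let k ≥ 2 be an integer. If N_{AB→A'B'} and N'_{A'B'→A''B''} are k-extendible bipartite channels, then their serial composition N' ∘ N : operators on H_A ⊗ H_B → operators on H_{A''} ⊗ H_{B''} is a k-extendible bipartite channel. -/

import Mathlib

open Matrix Kronecker
open scoped ComplexOrder

noncomputable section

/-- A quantum state: a positive semidefinite matrix with unit trace. -/
def IsState {n : Type} [Fintype n] (ρ : Matrix n n ℂ) : Prop :=
  ρ.PosSemidef ∧ ρ.trace = 1

/-- A pure quantum state: a rank-one projection onto a unit vector. -/
def IsPureState {n : Type} [Fintype n] (ρ : Matrix n n ℂ) : Prop :=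
  ∃ v : n → ℂ, (∑ i, Complex.normSq (v i)) = 1 ∧ ρ = Matrix.vecMulVec v (star v)

/-- The maximally entangled state `(1/|A|) ∑_{m,m'} |mm⟩⟨m'm'|` on `A ⊗ A`. -/
def maxEnt (A : Type) [Fintype A] [DecidableEq A] : Matrix (A × A) (A × A) ℂ :=
  Matrix.of fun p q => if p.1 = p.2 ∧ q.1 = q.2 then (1 : ℂ) / (Fintype.card A : ℂ) else 0

/-- The marginal of an operator on `A ⊗ B^{⊗ k}` obtained by tracing out all but the
first copy of `B`. -/
def marginalFirst {A B : Type} [Fintype B] [DecidableEq B] {k : ℕ} (hk : 0 < k)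
    (ω : Matrix (A × (Fin k → B)) (A × (Fin k → B)) ℂ) :
    Matrix (A × B) (A × B) ℂ :=
  Matrix.of fun p q => ∑ f : Fin k → B,
    if f ⟨0, hk⟩ = p.2 then ω (p.1, f) (q.1, Function.update f ⟨0, hk⟩ q.2) else 0

/-- Conjugation `W^π ω (W^π)†` of an operator on `A ⊗ B^{⊗ k}` by the unitary permuting
the `k` copies of `B` according to `π`. -/
def permAction {A B : Type} {k : ℕ} (π : Equiv.Perm (Fin k))
    (ω : Matrix (A × (Fin k → B)) (A × (Fin k → B)) ℂ) :
    Matrix (A × (Fin k → B)) (A × (Fin k → B)) ℂ :=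
  Matrix.of fun p q => ω (p.1, p.2 ∘ π) (q.1, q.2 ∘ π)

/-- A bipartite state (or operator) `ρ` on `A ⊗ B` is `k`-extendible with respect to `B`
if it has a permutation-invariant state extension on `A ⊗ B^{⊗ k}`. -/
def kExtendible {A B : Type} [Fintype A] [Fintype B] [DecidableEq B]
    (k : ℕ) (hk : 2 ≤ k) (ρ : Matrix (A × B) (A × B) ℂ) : Prop :=
  ∃ ω : Matrix (A × (Fin k → B)) (A × (Fin k → B)) ℂ,
    IsState ω ∧ (∀ π : Equiv.Perm (Fin k), permAction π ω = ω) ∧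
      marginalFirst (show 0 < k by omega) ω = ρ

/-- The tensor extension `id_R ⊗ Φ` of a linear map on matrices. -/
def tensorId (R : Type) {A B : Type} [Fintype A] [Fintype B]
    (Φ : Matrix A A ℂ →ₗ[ℂ] Matrix B B ℂ) :
    Matrix (R × A) (R × A) ℂ →ₗ[ℂ] Matrix (R × B) (R × B) ℂ where
  toFun X := Matrix.of fun p q => Φ (Matrix.of fun i j => X (p.1, i) (q.1, j)) p.2 q.2
  map_add' X Y := by
    ext p q
    have h : (Matrix.of fun i j => (X + Y) (p.1, i) (q.1, j))
        = (Matrix.of fun i j => X (p.1, i) (q.1, j))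
          + (Matrix.of fun i j => Y (p.1, i) (q.1, j)) := rfl
    show Φ (Matrix.of fun i j => (X + Y) (p.1, i) (q.1, j)) p.2 q.2 = _
    rw [h, map_add]
    rfl
  map_smul' c X := by
    ext p q
    have h : (Matrix.of fun i j => (c • X) (p.1, i) (q.1, j))
        = c • (Matrix.of fun i j => X (p.1, i) (q.1, j)) := rfl
    show Φ (Matrix.of fun i j => (c • X) (p.1, i) (q.1, j)) p.2 q.2 = _
    rw [h, _root_.map_smul]
    rfl

/-- Complete positivity of a linear map on matrices. -/
def IsCP {A B : Type} [Fintype A] [Fintype B]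
    (Φ : Matrix A A ℂ →ₗ[ℂ] Matrix B B ℂ) : Prop :=
  ∀ (R : Type) [Fintype R] (X : Matrix (R × A) (R × A) ℂ),
    X.PosSemidef → ((tensorId R Φ) X).PosSemidef

/-- A quantum channel: a completely positive trace-preserving linear map. -/
def IsCPTP {A B : Type} [Fintype A] [Fintype B]
    (Φ : Matrix A A ℂ →ₗ[ℂ] Matrix B B ℂ) : Prop :=
  IsCP Φ ∧ ∀ X : Matrix A A ℂ, (Φ X).trace = X.trace

/-- A bipartite channel `N : AB → A'B'` is `k`-extendible if it is a channel and has a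
channel extension `M : A B^{⊗k} → A' B'^{⊗k}` whose marginal on the first `B'` copy
reproduces `N` on the corresponding marginal input state, and which is covariant with
respect to simultaneous permutations of the `k` input and output `B` factors. -/
def kExtendibleChannel {A B A' B' : Type} [Fintype A] [Fintype B] [DecidableEq B]
    [Fintype A'] [Fintype B'] [DecidableEq B']
    (k : ℕ) (hk : 2 ≤ k)
    (N : Matrix (A × B) (A × B) ℂ →ₗ[ℂ] Matrix (A' × B') (A' × B') ℂ) : Prop :=
  IsCPTP N ∧
  ∃ M : Matrix (A × (Fin k → B)) (A × (Fin k → B)) ℂ →ₗ[ℂ]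
      Matrix (A' × (Fin k → B')) (A' × (Fin k → B')) ℂ,
    IsCPTP M ∧
    (∀ θ, IsState θ →
      marginalFirst (show 0 < k by omega) (M θ)
        = N (marginalFirst (show 0 < k by omega) θ)) ∧
    (∀ (π : Equiv.Perm (Fin k)) θ, M (permAction π θ) = permAction π (M θ))

/-- The ε-hypothesis-testing divergence `D_h^ε(ρ‖σ)`, valued in the extended reals. -/
def DH {n : Type} [Fintype n] [DecidableEq n] (ε : ℝ) (ρ σ : Matrix n n ℂ) : EReal :=
  let β : ℝ := sInf { x : ℝ | ∃ Λ : Matrix n n ℂ, Λ.PosSemidef ∧ (1 - Λ).PosSemidef ∧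
      1 - ε ≤ ((Λ * ρ).trace).re ∧ x = ((Λ * σ).trace).re }
  if β ≤ 0 then ⊤ else (((- Real.logb 2 β) : ℝ) : EReal)

/-- The k-unextendible ε-hypothesis-testing divergence
`E_k^ε(A;B)_ρ = inf {D_h^ε(ρ‖σ) : σ k-extendible state}`. -/
def EkEps {A B : Type} [Fintype A] [DecidableEq A] [Fintype B] [DecidableEq B]
    (k : ℕ) (hk : 2 ≤ k) (ε : ℝ) (ρ : Matrix (A × B) (A × B) ℂ) : EReal :=
  sInf { x : EReal | ∃ σ : Matrix (A × B) (A × B) ℂ,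
    IsState σ ∧ kExtendible k hk σ ∧ x = DH ε ρ σ }

/-- The max-relative entropy `D_max(ρ‖σ) = inf {λ : ρ ≤ 2^λ σ}`, valued in the extended
reals (equal to `⊤` when the support condition fails). -/
def Dmax {n : Type} [Fintype n] (ρ σ : Matrix n n ℂ) : EReal :=
  sInf { x : EReal | ∃ lam : ℝ, x = (lam : EReal) ∧
    ((((2 : ℝ) ^ lam : ℝ) : ℂ) • σ - ρ).PosSemidef }

/-- The k-unextendible max-relative entropy of a bipartite state:
`E_k^max(A;B)_ρ = inf {D_max(ρ‖σ) : σ k-extendible state}`. -/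
def EkMaxState {A B : Type} [Fintype A] [Fintype B] [DecidableEq B]
    (k : ℕ) (hk : 2 ≤ k) (ρ : Matrix (A × B) (A × B) ℂ) : EReal :=
  sInf { x : EReal | ∃ σ : Matrix (A × B) (A × B) ℂ,
    IsState σ ∧ kExtendible k hk σ ∧ x = Dmax ρ σ }

/-- The k-unextendible max-relative entropy of a channel `N : A → B`:
`E_k^max(N) = sup_ψ E_k^max(R;B)_{(id ⊗ N)(ψ)}` over pure inputs `ψ_{RA}` with `R ≅ A`. -/
def EkMaxChannel {A B : Type} [Fintype A] [Fintype B] [DecidableEq B]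
    (k : ℕ) (hk : 2 ≤ k) (N : Matrix A A ℂ →ₗ[ℂ] Matrix B B ℂ) : EReal :=
  sSup { x : EReal | ∃ ψ : Matrix (A × A) (A × A) ℂ, IsPureState ψ ∧
    x = EkMaxState k hk (tensorId A N ψ) }

/-- The square root of a positive semidefinite matrix, as `Matrix.PosSemidef.sqrt` was defined
in the older Mathlib (removed since). -/
def Matrix.PosSemidef.sqrt {n : Type*} [Fintype n] {𝕜 : Type*} [RCLike 𝕜] [DecidableEq n]
    {A : Matrix n n 𝕜} (hA : A.PosSemidef) : Matrix n n 𝕜 :=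
  hA.1.eigenvectorUnitary.1 * diagonal ((↑) ∘ (√·) ∘ hA.1.eigenvalues) *
    (star hA.1.eigenvectorUnitary : Matrix n n 𝕜)

open scoped Classical in
/-- The fidelity `F(ρ,σ) = ‖√ρ √σ‖₁² = (Tr √((√ρ√σ)† (√ρ√σ)))²`. -/
def fidelity {n : Type} [Fintype n] [DecidableEq n] (ρ σ : Matrix n n ℂ) : ℝ :=
  if h : ρ.PosSemidef ∧ σ.PosSemidef then
    (((Matrix.posSemidef_conjTranspose_mul_self (h.1.sqrt * h.2.sqrt)).sqrt).trace.re) ^ 2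
  else 0

/-- Reshuffling `(X ⊗ Y) ⊗ Z ≃ (X ⊗ Z) ⊗ Y`. -/
def assocShuffle (X Y Z : Type) : (X × Y) × Z ≃ (X × Z) × Y where
  toFun p := ((p.1.1, p.2), p.1.2)
  invFun p := ((p.1.1, p.2), p.1.2)
  left_inv _ := rfl
  right_inv _ := rfl

/-- Reshuffling `(X ⊗ Z) ⊗ W ≃ X ⊗ (W ⊗ Z)`. -/
def outShuffle (X Z W : Type) : (X × Z) × W ≃ X × (W × Z) where
  toFun p := (p.1.1, (p.2, p.1.2))
  invFun p := ((p.1, p.2.2), p.2.1)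
  left_inv _ := rfl
  right_inv _ := rfl

/-- Application of the channel `N : A → B` to the `A` factor of an operator on
`(X ⊗ A) ⊗ Z`, producing an operator on `X ⊗ (B ⊗ Z)`. -/
def channelStep (X Z : Type) [Fintype X] [Fintype Z] {A B : Type} [Fintype A] [Fintype B]
    (N : Matrix A A ℂ →ₗ[ℂ] Matrix B B ℂ)
    (ρ : Matrix ((X × A) × Z) ((X × A) × Z) ℂ) :
    Matrix (X × (B × Z)) (X × (B × Z)) ℂ :=
  (Matrix.reindex (outShuffle X Z B) (outShuffle X Z B))
    ((tensorId (X × Z) N)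
      ((Matrix.reindex (assocShuffle X A Z) (assocShuffle X A Z)) ρ))

/-- A separable bipartite state: a convex combination of product states. -/
def Separable {A B : Type} [Fintype A] [Fintype B]
    (σ : Matrix (A × B) (A × B) ℂ) : Prop :=
  ∃ (m : ℕ) (p : Fin m → ℝ) (τ : Fin m → Matrix A A ℂ) (ω : Fin m → Matrix B B ℂ),
    (∀ x, 0 ≤ p x) ∧ (∑ x, p x = 1) ∧ (∀ x, IsState (τ x)) ∧ (∀ x, IsState (ω x)) ∧
      σ = ∑ x, ((p x : ℂ) • (τ x ⊗ₖ ω x))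

/-- The tensor product `E ⊗ F` of two linear maps on matrices. -/
def tensorMap {A B A' B' : Type} [Fintype A] [Fintype B] [Fintype A'] [Fintype B']
    (E : Matrix A A ℂ →ₗ[ℂ] Matrix A' A' ℂ)
    (F : Matrix B B ℂ →ₗ[ℂ] Matrix B' B' ℂ) :
    Matrix (A × B) (A × B) ℂ →ₗ[ℂ] Matrix (A' × B') (A' × B') ℂ :=
  (Matrix.reindexLinearEquiv ℂ ℂ (Equiv.prodComm B' A') (Equiv.prodComm B' A')).toLinearMap
    ∘ₗ (tensorId B' E)
    ∘ₗ (Matrix.reindexLinearEquiv ℂ ℂ (Equiv.prodComm A B') (Equiv.prodComm A B')).toLinearMap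
    ∘ₗ (tensorId A F)

/-- A one-way LOCC channel from Alice to Bob: `L = ∑_y E^y ⊗ F^y` with `{E^y}` a quantum
instrument on Alice's side and each `F^y` a channel on Bob's side. -/
def IsOneWayLOCC {A B A' B' : Type} [Fintype A] [Fintype B] [Fintype A'] [Fintype B']
    (L : Matrix (A × B) (A × B) ℂ →ₗ[ℂ] Matrix (A' × B') (A' × B') ℂ) : Prop :=
  ∃ (m : ℕ) (E : Fin m → (Matrix A A ℂ →ₗ[ℂ] Matrix A' A' ℂ))
      (F : Fin m → (Matrix B B ℂ →ₗ[ℂ] Matrix B' B' ℂ)),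
    (∀ y, IsCP (E y)) ∧ (∀ X : Matrix A A ℂ, (∑ y, (E y) X).trace = X.trace) ∧
    (∀ y, IsCPTP (F y)) ∧ L = ∑ y, tensorMap (E y) (F y)

end

lemma tensorId_comp {R A B C : Type} [Fintype R] [Fintype A] [Fintype B] [Fintype C]
    (Φ : Matrix A A ℂ →ₗ[ℂ] Matrix B B ℂ) (Ψ : Matrix B B ℂ →ₗ[ℂ] Matrix C C ℂ) :
    tensorId R (Ψ ∘ₗ Φ) = tensorId R Ψ ∘ₗ tensorId R Φ := rfl

lemma IsCP.comp {A B C : Type} [Fintype A] [Fintype B] [Fintype C]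
    {Φ : Matrix A A ℂ →ₗ[ℂ] Matrix B B ℂ} {Ψ : Matrix B B ℂ →ₗ[ℂ] Matrix C C ℂ}
    (hΦ : IsCP Φ) (hΨ : IsCP Ψ) : IsCP (Ψ ∘ₗ Φ) := by
  intro R _ X hX
  rw [tensorId_comp]
  exact hΨ R _ (hΦ R X hX)

lemma IsCP.posSemidef {A B : Type} [Fintype A] [Fintype B]
    {Φ : Matrix A A ℂ →ₗ[ℂ] Matrix B B ℂ} (hΦ : IsCP Φ)
    {X : Matrix A A ℂ} (hX : X.PosSemidef) : (Φ X).PosSemidef := by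
  have hY : (X.submatrix (Prod.snd : Unit × A → A) Prod.snd).PosSemidef :=
    hX.submatrix _
  have h := hΦ Unit (X.submatrix Prod.snd Prod.snd) hY
  have h2 := h.submatrix (fun a : B => ((), a))
  convert h2 using 2
  rfl

lemma IsCPTP.comp {A B C : Type} [Fintype A] [Fintype B] [Fintype C]
    {Φ : Matrix A A ℂ →ₗ[ℂ] Matrix B B ℂ} {Ψ : Matrix B B ℂ →ₗ[ℂ] Matrix C C ℂ}
    (hΦ : IsCPTP Φ) (hΨ : IsCPTP Ψ) : IsCPTP (Ψ ∘ₗ Φ) :=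
  ⟨hΦ.1.comp hΨ.1, fun X => by simp [hΨ.2, hΦ.2]⟩

/-- the serial composition of two `k`-extendible bipartite channels is a
`k`-extendible bipartite channel. -/
theorem kExtendibleChannel_comp
    {A B A' B' A'' B'' : Type}
    [Fintype A] [DecidableEq A] [Fintype B] [DecidableEq B]
    [Fintype A'] [DecidableEq A'] [Fintype B'] [DecidableEq B']
    [Fintype A''] [DecidableEq A''] [Fintype B''] [DecidableEq B'']
    (k : ℕ) (hk : 2 ≤ k)
    (N : Matrix (A × B) (A × B) ℂ →ₗ[ℂ] Matrix (A' × B') (A' × B') ℂ)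
    (hN : kExtendibleChannel k hk N)
    (N' : Matrix (A' × B') (A' × B') ℂ →ₗ[ℂ] Matrix (A'' × B'') (A'' × B'') ℂ)
    (hN' : kExtendibleChannel k hk N') :
    kExtendibleChannel k hk (N' ∘ₗ N) := by
  obtain ⟨hNc, M, hMc, hMm, hMp⟩ := hN
  obtain ⟨hN'c, M', hM'c, hM'm, hM'p⟩ := hN'
  refine ⟨hNc.comp hN'c, M' ∘ₗ M, hMc.comp hM'c, ?_, ?_⟩
  · intro θ hθ
    have hMθ : IsState (M θ) := ⟨hMc.1.posSemidef hθ.1, by rw [hMc.2, hθ.2]⟩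
    simp only [LinearMap.comp_apply]
    rw [hM'm (M θ) hMθ, hMm θ hθ]
  · intro π θ
    simp only [LinearMap.comp_apply]
    rw [hMp, hM'p]
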